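/- Let b > 1 and n > 1 be integers and a a positive integer with gcd(r_b(n), a) = 1. The Frobenius number of S_a(b,n) is equal to (n−1)·(b^n − 1 − a) + a·r_b(n) if a < b^n − 1, and equal to b^n − 1 − a + a·r_b(n) if a > b^n − 1. -/

import Mathlib

set_option linter.unusedSectionVars false

/-- The repunit number in base `b` of length `ℓ`: `r_b(ℓ) = ∑_{j=0}^{ℓ-1} b^j`. -/
def repunit (b ℓ : ℕ) : ℕ := ∑ j ∈ Finset.range ℓ, b ^ j
lemma repunit_succ (b l : ℕ) : repunit b (l+1) = repunit b l + b ^ l := Finset.sum_range_succ _ _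
lemma repunit_succ' (b l : ℕ) : repunit b (l+1) = b * repunit b l + 1 := by
  unfold repunit
  rw [Finset.sum_range_succ', Finset.mul_sum]
  simp [pow_succ, Nat.mul_comm]
lemma repunit_zero (b : ℕ) : repunit b 0 = 0 := by simp [repunit]
lemma repunit_one (b : ℕ) : repunit b 1 = 1 := by simp [repunit]
lemma pred_mul_repunit (b l : ℕ) (hb : 1 ≤ b) : (b-1) * repunit b l + 1 = b ^ l := by
  induction l with
  | zero => simp [repunit]
  | succ l ih =>
    rw [repunit_succ']
    have h1 : (b-1) * (b * repunit b l + 1) = b * ((b-1) * repunit b l) + (b-1) := by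
      rw [Nat.mul_add, Nat.mul_one]; ring_nf
    rw [h1]
    calc b * ((b-1) * repunit b l) + (b-1) + 1 = b * ((b-1) * repunit b l) + b := by omega
    _ = b * ((b-1) * repunit b l + 1) := by ring
    _ = b * b ^ l := by rw [ih]
    _ = b ^ (l+1) := by rw [pow_succ]; ring
lemma repunit_mono (b : ℕ) {l m : ℕ} (h : l ≤ m) : repunit b l ≤ repunit b m := by
  unfold repunit
  exact Finset.sum_le_sum_of_subset (Finset.range_subset_range.2 h)
lemma repunit_pos (b l : ℕ) (hl : 1 ≤ l) : 1 ≤ repunit b l := by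
  calc 1 = repunit b 1 := (repunit_one b).symm
  _ ≤ _ := repunit_mono b hl
lemma le_repunit (b n : ℕ) (hb : 1 ≤ b) : n ≤ repunit b n := by
  induction n with
  | zero => simp [repunit]
  | succ n ih =>
    rw [repunit_succ]
    have : 1 ≤ b ^ n := Nat.one_le_pow _ _ hb
    omega
lemma pow_lt_repunit (b n : ℕ) (hn : 2 ≤ n) : b ^ (n-1) < repunit b n := by
  obtain ⟨m, rfl⟩ : ∃ m, n = m + 1 := ⟨n-1, by omega⟩
  simp only [Nat.add_sub_cancel]
  rw [repunit_succ]
  have : 1 ≤ repunit b m := repunit_pos b m (by omega)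
  omega
/-- The sequence `a_i = r_b(n) + a·r_b(i-1)`. -/
def aseq (b a n i : ℕ) : ℕ := repunit b n + a * repunit b (i - 1)

/-- The additive submonoid `S_a(b,n)` of `ℕ` generated by `{a_i : i ≥ 1}`. -/
def grep (b a n : ℕ) : AddSubmonoid ℕ :=
  AddSubmonoid.closure {x | ∃ i, 1 ≤ i ∧ x = aseq b a n i}

lemma repunit_reduce (b n : ℕ) (hn : 0 < n) :
    ∀ j, ∃ q l, l < n ∧ repunit b j = q * repunit b n + repunit b l := by
  intro j
  induction j using Nat.strong_induction_on with
  | _ j ih =>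
    by_cases hj : j < n
    · exact ⟨0, j, hj, by simp⟩
    · push_neg at hj
      have hsplit : repunit b j = b ^ (j - n) * repunit b n + repunit b (j - n) := by
        unfold repunit
        rw [Finset.mul_sum]
        have : Finset.range j = Finset.range (j-n) ∪ Finset.Ico (j-n) j := by
          simp only [Finset.range_eq_Ico]
          rw [Finset.Ico_union_Ico_eq_Ico (by omega) (by omega)]
        rw [this, Finset.sum_union (by
          rw [Finset.range_eq_Ico]; exact Finset.Ico_disjoint_Ico_consecutive 0 (j-n) j)]
        have : ∑ i ∈ Finset.Ico (j-n) j, b ^ i = ∑ i ∈ Finset.range n, b ^ (j - n) * b ^ i := by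
          rw [Finset.sum_Ico_eq_sum_range]
          apply Finset.sum_congr (by congr 1; omega)
          intro i _
          rw [← pow_add]
        rw [this]; ring
      obtain ⟨q, l, hl, hrec⟩ := ih (j - n) (by omega)
      exact ⟨b ^ (j-n) + q, l, hl, by rw [hsplit, hrec]; ring⟩

lemma mem_grep_iff (b a n : ℕ) (hn : 0 < n) (x : ℕ) :
    x ∈ grep b a n ↔ ∃ m, ∃ c : ℕ → ℕ, (∑ l ∈ Finset.range n, c l) ≤ m ∧
      x = m * repunit b n + a * ∑ l ∈ Finset.range n, c l * repunit b l := by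
  constructor
  · intro hx
    induction hx using AddSubmonoid.closure_induction with
    | mem y hy =>
      obtain ⟨i, hi, rfl⟩ := hy
      obtain ⟨q, l, hl, hq⟩ := repunit_reduce b n hn (i - 1)
      refine ⟨1 + a * q, fun l' => if l' = l then 1 else 0, ?_, ?_⟩
      · rw [Finset.sum_ite_eq' (Finset.range n) l]
        simp [hl]
      · rw [aseq, hq]
        have : ∑ l' ∈ Finset.range n, (if l' = l then 1 else 0) * repunit b l'
            = repunit b l := by
          rw [Finset.sum_congr rfl (fun l' _ => ite_zero_mul (l' = l) 1 (repunit b l'))]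
          simp only [one_mul]
          rw [Finset.sum_ite_eq' (Finset.range n) l]
          simp [hl]
        rw [this]; ring
    | zero => exact ⟨0, fun _ => 0, by simp, by simp⟩
    | add y z hy hz ihy ihz =>
      obtain ⟨m1, c1, h1, e1⟩ := ihy
      obtain ⟨m2, c2, h2, e2⟩ := ihz
      refine ⟨m1 + m2, fun l => c1 l + c2 l, ?_, ?_⟩
      · rw [Finset.sum_add_distrib]; omega
      · rw [e1, e2]
        have : ∑ l ∈ Finset.range n, (c1 l + c2 l) * repunit b l
            = (∑ l ∈ Finset.range n, c1 l * repunit b l)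
              + ∑ l ∈ Finset.range n, c2 l * repunit b l := by
          rw [← Finset.sum_add_distrib]
          exact Finset.sum_congr rfl (fun l _ => add_mul _ _ _)
        rw [this]; ring
  · rintro ⟨m, c, hc, rfl⟩
    have hgen : ∀ l, aseq b a n (l+1) ∈ grep b a n := fun l =>
      AddSubmonoid.subset_closure ⟨l+1, by omega, rfl⟩
    have h1 : repunit b n ∈ grep b a n := by
      have := hgen 0
      simpa [aseq, repunit_zero] using this
    have hmem : (∑ l ∈ Finset.range n, c l * aseq b a n (l+1)) ∈ grep b a n := by
      apply AddSubmonoid.sum_mem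
      intro l _
      rw [← smul_eq_mul]
      exact AddSubmonoid.nsmul_mem _ (hgen l) (c l)
    have hmem2 : ((m - ∑ l ∈ Finset.range n, c l) * repunit b n) ∈ grep b a n := by
      rw [← smul_eq_mul]
      exact AddSubmonoid.nsmul_mem _ h1 _
    have key : m * repunit b n + a * ∑ l ∈ Finset.range n, c l * repunit b l
        = (m - ∑ l ∈ Finset.range n, c l) * repunit b n
          + ∑ l ∈ Finset.range n, c l * aseq b a n (l+1) := by
      have e1 : ∑ l ∈ Finset.range n, c l * aseq b a n (l+1)
          = (∑ l ∈ Finset.range n, c l) * repunit b n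
            + a * ∑ l ∈ Finset.range n, c l * repunit b l := by
        have : ∀ l ∈ Finset.range n, c l * aseq b a n (l+1)
            = c l * repunit b n + a * (c l * repunit b l) := by
          intro l _
          simp only [aseq, Nat.add_sub_cancel]
          ring
        rw [Finset.sum_congr rfl this, Finset.sum_add_distrib, ← Finset.sum_mul,
          ← Finset.mul_sum]
      rw [e1]
      have := Nat.sub_add_cancel hc
      nlinarith [Nat.sub_add_cancel hc]
    rw [key]
    exact AddSubmonoid.add_mem _ hmem2 hmem

def sb (b x : ℕ) : ℕ := (Nat.digits b x).sum

lemma succ_pred_mul {b : ℕ} (hb : 1 ≤ b) (p : ℕ) : (b-1)*p + p = b*p := by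
  have h : ((b-1)+1)*p = (b-1)*p + p := by ring
  rw [← h]
  congr 1
  omega

section SB
variable {b : ℕ} (hb : 1 < b)
include hb

lemma sb_zero : sb b 0 = 0 := by simp [sb]

lemma sb_def {x : ℕ} (hx : 0 < x) : sb b x = x % b + sb b (x / b) := by
  unfold sb
  rw [Nat.digits_def' hb hx]
  simp

lemma sb_mul_add {q s : ℕ} (hs : s < b) : sb b (b * q + s) = s + sb b q := by
  rcases Nat.eq_zero_or_pos (b * q + s) with h | h
  · have hq : q = 0 := by
      by_contra hq
      have : 1 ≤ q := by omega
      have : b * 1 ≤ b * q := Nat.mul_le_mul_left b this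
      omega
    have hs0 : s = 0 := by omega
    simp [hq, hs0, sb_zero hb]
  · rw [sb_def hb h]
    congr 1
    · rw [Nat.mul_add_mod, Nat.mod_eq_of_lt hs]
    · congr 1
      rw [Nat.mul_add_div (by omega), Nat.div_eq_of_lt hs]
      omega

lemma sb_lt {s : ℕ} (hs : s < b) : sb b s = s := by
  have := sb_mul_add hb (q := 0) hs
  simpa [sb_zero hb] using this

lemma sb_succ_le (x : ℕ) : sb b (x + 1) ≤ sb b x + 1 := by
  induction x using Nat.strong_induction_on with
  | _ x ih =>
    rcases Nat.eq_zero_or_pos x with rfl | hx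
    · rw [sb_zero hb, sb_lt hb hb]
    · obtain ⟨q, s, hs, hxe⟩ : ∃ q s, s < b ∧ x = b * q + s :=
        ⟨x / b, x % b, Nat.mod_lt _ (by omega), by have := Nat.div_add_mod x b; omega⟩
      by_cases hcase : s = b - 1
      · have e1 : sb b (x + 1) = sb b (q + 1) := by
          have hx1 : x + 1 = b * (q + 1) + 0 := by
            have : b * (q+1) = b * q + b := by ring
            omega
          rw [hx1, sb_mul_add hb (by omega)]
          omega
        have e2 : sb b x = (b - 1) + sb b q := by
          rw [hxe, sb_mul_add hb hs, hcase]
        rcases Nat.eq_zero_or_pos q with rfl | hq0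
        · rw [e1, e2, sb_zero hb, sb_lt hb hb]
          omega
        · have hqx : q < x := by
            have : 2 * q ≤ b * q := Nat.mul_le_mul_right q hb
            omega
          have := ih q hqx
          rw [e1, e2]
          omega
      · have e1 : sb b (x + 1) = (s + 1) + sb b q := by
          have hx1 : x + 1 = b * q + (s + 1) := by omega
          rw [hx1, sb_mul_add hb (by omega)]
        have e2 : sb b x = s + sb b q := by rw [hxe, sb_mul_add hb hs]
        rw [e1, e2]
        omega

lemma sb_add_le (x t : ℕ) : sb b (x + t) ≤ sb b x + t := by
  induction t with
  | zero => simp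
  | succ t ih =>
    calc sb b (x + (t+1)) = sb b ((x + t) + 1) := by ring_nf
    _ ≤ sb b (x + t) + 1 := sb_succ_le hb _
    _ ≤ sb b x + (t + 1) := by omega

lemma sb_le_self (x : ℕ) : sb b x ≤ x := by
  have := sb_add_le hb 0 x
  simpa [sb_zero hb] using this

lemma sb_pow_sub_one (j : ℕ) : sb b (b ^ j - 1) = j * (b - 1) := by
  induction j with
  | zero => simp [sb_zero hb]
  | succ j ih =>
    have hp : 1 ≤ b ^ j := Nat.one_le_pow _ _ (by omega)
    have h0 : b * (b ^ j - 1) + b * 1 = b * b ^ j := by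
      rw [← Nat.mul_add]
      congr 1
      omega
    have hps : b ^ (j+1) = b * b ^ j := by rw [pow_succ]; ring
    have h1 : b ^ (j+1) - 1 = b * (b ^ j - 1) + (b - 1) := by omega
    rw [h1, sb_mul_add hb (by omega), ih]
    ring

lemma sb_add_pow_le (x l : ℕ) : sb b (x + b ^ l) ≤ sb b x + 1 := by
  induction l generalizing x with
  | zero => simpa using sb_succ_le hb x
  | succ l ih =>
    obtain ⟨q, s, hs, hxe⟩ : ∃ q s, s < b ∧ x = b * q + s :=
      ⟨x / b, x % b, Nat.mod_lt _ (by omega), by have := Nat.div_add_mod x b; omega⟩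
    have h1 : x + b ^ (l+1) = b * (q + b ^ l) + s := by rw [hxe, pow_succ]; ring
    rw [h1, sb_mul_add hb hs, hxe, sb_mul_add hb hs]
    have := ih q
    omega

lemma sb_split (u : ℕ) : ∀ j z, z < b ^ j → sb b (u * b ^ j + z) = sb b u + sb b z := by
  intro j
  induction j generalizing u with
  | zero =>
    intro z hz
    simp only [pow_zero, Nat.lt_one_iff] at hz
    subst hz
    simp [sb_zero hb]
  | succ j ih =>
    intro z hz
    obtain ⟨w, s, hs, hze⟩ : ∃ w s, s < b ∧ z = b * w + s :=
      ⟨z / b, z % b, Nat.mod_lt _ (by omega), by have := Nat.div_add_mod z b; omega⟩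
    have hp : b ^ (j+1) = b * b ^ j := by rw [pow_succ]; ring
    have hw : w < b ^ j := by
      have h2 : b * w < b * b ^ j := by omega
      exact Nat.lt_of_mul_lt_mul_left h2
    have h1 : u * b ^ (j+1) + z = b * (u * b ^ j + w) + s := by rw [hze, hp]; ring
    rw [h1, sb_mul_add hb hs, ih u w hw, hze, sb_mul_add hb hs]
    omega

lemma sb_borrow : ∀ j x l, l < j → x < b ^ j → b ^ j ≤ x + b ^ l →
    sb b (x + b ^ l - b ^ j) ≤ sb b x := by
  intro j
  induction j with
  | zero => omega
  | succ j ih =>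
    intro x l hl hxj hge
    set p := b ^ j with hpdef
    have hppos : 0 < p := by rw [hpdef]; exact Nat.pow_pos (by omega)
    have hp : b ^ (j+1) = b * p := by rw [pow_succ]; ring
    obtain ⟨u, z, hzb, hxe⟩ : ∃ u z, z < p ∧ x = u * p + z :=
      ⟨x / p, x % p, Nat.mod_lt _ hppos, by
        have h := Nat.div_add_mod x p
        have h2 : p * (x / p) = (x / p) * p := Nat.mul_comm _ _
        omega⟩
    have hbl : b ^ l ≤ p := Nat.pow_le_pow_right (by omega) (by omega)
    have hub : u = b - 1 := by
      have h1 : u < b := by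
        by_contra hc
        push_neg at hc
        have : b * p ≤ u * p := Nat.mul_le_mul_right p hc
        omega
      have h2 : b - 1 ≤ u := by
        by_contra hc
        push_neg at hc
        have hu1 : u + 1 ≤ b - 1 := by omega
        have : (u+1) * p ≤ (b-1) * p := Nat.mul_le_mul_right p hu1
        have he : (u+1) * p = u * p + p := by ring
        have := succ_pred_mul (show 1 ≤ b by omega) p
        omega
      omega
    rw [hub] at hxe
    have hsm := succ_pred_mul (show 1 ≤ b by omega) p
    have hsbx : sb b x = (b - 1) + sb b z := by
      rw [hxe, sb_split hb _ j z hzb, sb_lt hb (by omega)]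
    by_cases hjl : j = l
    · subst hjl
      have heq : x + b ^ j - b ^ (j+1) = z := by omega
      rw [heq, hsbx]
      omega
    · have hlj : l < j := by omega
      have hzge : p ≤ z + b ^ l := by omega
      have heq : x + b ^ l - b ^ (j+1) = z + b ^ l - p := by omega
      rw [heq, hsbx]
      have := ih z l hlj hzb hzge
      omega

end SB

def phi (b p M : ℕ) : ℕ := M / p + sb b (M % p)

section PHI
variable {b : ℕ} (hb : 1 < b)
include hb

lemma phi_zero (p : ℕ) : phi b p 0 = 0 := by simp [phi, sb_zero hb]

lemma phi_eval {p Q R : ℕ} (hR : R < p) : phi b p (Q * p + R) = Q + sb b R := by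
  unfold phi
  rw [Nat.add_comm (Q * p) R, Nat.add_mul_div_right _ _ (by omega : 0 < p),
    Nat.add_mul_mod_self_right, Nat.div_eq_of_lt hR, Nat.mod_eq_of_lt hR]
  omega

lemma phi_add_pow_le {J l : ℕ} (hl : 1 ≤ l) (hlJ : l ≤ J) (M : ℕ) :
    phi b (b ^ J) (M + b ^ l) ≤ phi b (b ^ J) M + 1 := by
  set p := b ^ J with hp
  have hppos : 0 < p := by rw [hp]; exact Nat.pow_pos (by omega)
  obtain ⟨Q, R, hR, hMe⟩ : ∃ Q R, R < p ∧ M = Q * p + R :=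
    ⟨M / p, M % p, Nat.mod_lt _ hppos, by
      have h := Nat.div_add_mod M p
      have h2 : p * (M / p) = (M / p) * p := Nat.mul_comm _ _
      omega⟩
  have hMphi : phi b p M = Q + sb b R := by rw [hMe, phi_eval hb hR]
  rcases eq_or_lt_of_le hlJ with rfl | hlJ'
  · have : M + b ^ l = (Q + 1) * p + R := by rw [hMe]; ring
    rw [this, phi_eval hb hR, hMphi]
    omega
  · have hblp : b ^ l < p := Nat.pow_lt_pow_right hb hlJ'
    rcases Nat.lt_or_ge (R + b ^ l) p with hcase | hcase
    · have : M + b ^ l = Q * p + (R + b ^ l) := by rw [hMe]; ring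
      rw [this, phi_eval hb hcase, hMphi]
      have := sb_add_pow_le hb R l
      omega
    · have : M + b ^ l = (Q + 1) * p + (R + b ^ l - p) := by
        have : (Q+1)*p = Q*p + p := by ring
        omega
      rw [this, phi_eval hb (by omega), hMphi]
      have hbor := sb_borrow hb J R l hlJ' hR hcase
      rw [← hp] at hbor
      omega

lemma phi_add_mul_pow_le {J l : ℕ} (hl : 1 ≤ l) (hlJ : l ≤ J) (M c : ℕ) :
    phi b (b ^ J) (M + c * b ^ l) ≤ phi b (b ^ J) M + c := by
  induction c with
  | zero => simp
  | succ c ih =>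
    have h1 : M + (c+1) * b ^ l = (M + c * b ^ l) + b ^ l := by ring
    rw [h1]
    calc phi b (b^J) ((M + c * b ^ l) + b ^ l) ≤ phi b (b^J) (M + c * b^l) + 1 :=
      phi_add_pow_le hb hl hlJ _
    _ ≤ phi b (b^J) M + (c+1) := by omega

lemma phi_sum_le {J n : ℕ} (hn : n = J + 1) (c : ℕ → ℕ) :
    phi b (b ^ J) (∑ l ∈ Finset.Ico 1 n, c l * b ^ l) ≤ ∑ l ∈ Finset.Ico 1 n, c l := by
  classical
  have key : ∀ s : Finset ℕ, s ⊆ Finset.Ico 1 n →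
      phi b (b ^ J) (∑ l ∈ s, c l * b ^ l) ≤ ∑ l ∈ s, c l := by
    intro s
    induction s using Finset.induction_on with
    | empty => intro _; simp [phi_zero hb]
    | @insert x s' hx ih =>
      intro hsub
      have hxmem : x ∈ Finset.Ico 1 n := hsub (Finset.mem_insert_self _ _)
      have hx1 : 1 ≤ x := (Finset.mem_Ico.mp hxmem).1
      have hxJ : x ≤ J := by
        have := (Finset.mem_Ico.mp hxmem).2
        omega
      rw [Finset.sum_insert hx, Finset.sum_insert hx, Nat.add_comm (c x * b ^ x)]
      calc phi b (b^J) ((∑ l ∈ s', c l * b ^ l) + c x * b ^ x)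
          ≤ phi b (b^J) (∑ l ∈ s', c l * b ^ l) + c x := phi_add_mul_pow_le hb hx1 hxJ _ _
      _ ≤ (∑ l ∈ s', c l) + c x := by
          have := ih (fun y hy => hsub (Finset.mem_insert_of_mem hy))
          omega
      _ = c x + ∑ l ∈ s', c l := by omega
  exact key _ (le_refl _)

end PHI

lemma final_contra (νβ C D x m' w W G : ℕ) (t1 : νβ ≤ G + (x-1)) (t2 : w + G ≤ C)
    (hCD : C + D = νβ) (hx : x = m' + D) (hw : w + 1 = W) (hf : m' * 2 ≤ W)
    (hm : 1 ≤ m') (hx1 : 1 ≤ x) : False := by omega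

lemma count_lower {b n : ℕ} (hb : 1 < b) (hn : 2 ≤ n) (c : ℕ → ℕ) (m' : ℕ) (hm' : 1 ≤ m')
    (hK : (∑ l ∈ Finset.Ico 1 n, c l * repunit b l) + (n-1) = m' * repunit b n) :
    (n-1)*(b-1) + 1 ≤ ∑ l ∈ Finset.Ico 1 n, c l := by
  by_contra hC
  push_neg at hC
  obtain ⟨ν, hν⟩ : ∃ ν, n - 1 = ν := ⟨_, rfl⟩
  obtain ⟨β, hβ⟩ : ∃ β, b - 1 = β := ⟨_, rfl⟩
  obtain ⟨P, hP⟩ : ∃ P, b ^ n = P := ⟨_, rfl⟩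
  obtain ⟨E, hE⟩ : ∃ E, b ^ n - 1 = E := ⟨_, rfl⟩
  have hν1 : 1 ≤ ν := by omega
  have hβ1 : 1 ≤ β := by omega
  set C := ∑ l ∈ Finset.Ico 1 n, c l with hCdef
  set K := ∑ l ∈ Finset.Ico 1 n, c l * repunit b l with hKdef
  set M := ∑ l ∈ Finset.Ico 1 n, c l * b ^ l with hMdef
  set p := b ^ (n-1) with hpdef
  have hppos : 0 < p := by rw [hpdef]; exact Nat.pow_pos (by omega)
  have hPpos : 1 ≤ P := by rw [← hP]; exact Nat.one_le_pow _ _ (by omega)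
  have hEP : E + 1 = P := by omega
  rw [hν, hβ] at hC
  have hC' : C ≤ ν * β := by omega
  have hbn : β * repunit b n + 1 = P := by
    rw [← hβ, ← hP]
    exact pred_mul_repunit b n (by omega)
  have hbp : β * p + p = b * p := by rw [← hβ]; exact succ_pred_mul (by omega) p
  have hbpP : b * p = P := by
    rw [← hP, hpdef, ← pow_succ']
    congr 1
    omega
  have hp2 : 2 ≤ p := by
    calc 2 ≤ b := by omega
    _ = b ^ 1 := (pow_one b).symm
    _ ≤ p := Nat.pow_le_pow_right (by omega) (by omega)
  -- M = β*K + C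
  have hM1 : M = β * K + C := by
    rw [hMdef, hKdef, hCdef, Finset.mul_sum, ← Finset.sum_add_distrib]
    apply Finset.sum_congr rfl
    intro l _
    have h := pred_mul_repunit b l (by omega : 1 ≤ b)
    rw [hβ] at h
    calc c l * b ^ l = c l * (β * repunit b l + 1) := by rw [h]
    _ = β * (c l * repunit b l) + c l := by ring
  -- EQ1 : M + ν*β = m'*E + C
  have hEQ1 : M + ν * β = m' * E + C := by
    have h1 : β * (K + ν) = β * (m' * repunit b n) := by
      rw [← hν, hK]
    have h2 : β * (m' * repunit b n) = m' * (β * repunit b n) := by ring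
    have h3 : m' * (β * repunit b n) + m' * 1 = m' * P := by
      rw [← Nat.mul_add, hbn]
    have h4 : m' * E + m' * 1 = m' * P := by
      rw [← Nat.mul_add, (show E + 1 = P by omega)]
    have h5 : β * (K + ν) = β * K + β * ν := by ring
    have h6 : β * ν = ν * β := by ring
    omega
  -- M ≤ p * C
  have hM2 : M ≤ p * C := by
    rw [hMdef, hCdef, Finset.mul_sum]
    apply Finset.sum_le_sum
    intro l hl
    have hl2 : l ≤ n - 1 := by
      have := (Finset.mem_Ico.mp hl).2
      omega
    calc c l * b ^ l ≤ c l * p := Nat.mul_le_mul_left _ (Nat.pow_le_pow_right (by omega) hl2)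
    _ = p * c l := Nat.mul_comm _ _
  obtain ⟨D, hCD⟩ : ∃ D, C + D = ν * β := ⟨ν * β - C, by omega⟩
  -- m' ≤ n - 2
  have hm'2 : m' + 1 ≤ ν := by
    by_contra hc
    push_neg at hc
    have hm'3 : ν ≤ m' := by omega
    have e1 : ν * E ≤ m' * E := Nat.mul_le_mul_right _ hm'3
    have f1 : D * 1 ≤ D * p := Nat.mul_le_mul_left _ (by omega)
    have f2 : C * p + D * p = (ν * β) * p := by rw [← Nat.add_mul, hCD]
    have e2 : p * C = C * p := Nat.mul_comm _ _
    have e3 : (ν * β) * p = ν * (β * p) := by ring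
    have e6 : ν * (β * p) + ν * p = ν * (b * p) := by rw [← Nat.mul_add, hbp]
    have e10 : ν * (b * p) = ν * P := by rw [hbpP]
    have e7 : ν * E + ν * 1 = ν * P := by
      rw [← Nat.mul_add, (show E + 1 = P by omega)]
    have e9 : ν * 2 ≤ ν * p := Nat.mul_le_mul_left _ hp2
    omega
  obtain ⟨x, hxdef⟩ : ∃ x, x = m' + D := ⟨_, rfl⟩
  have hx1 : 1 ≤ x := by omega
  -- x ≤ p
  have hxp : x ≤ p := by
    have h1 : ν ≤ b ^ (n-2) := by
      have : n - 2 < b ^ (n-2) := Nat.lt_pow_self hb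
      omega
    have h2 : ν * b ≤ b ^ (n-2) * b := Nat.mul_le_mul_right _ h1
    have h3 : b ^ (n-2) * b = p := by
      rw [hpdef, ← pow_succ]
      congr 1
      omega
    have h5 : ν + ν * β ≤ ν * b := by
      have e : ν * b = ν * (β + 1) := by
        rw [(show b = β + 1 by omega)]
      rw [e, Nat.mul_add, Nat.mul_one]
      omega
    omega
  -- EQ2 : M + x = m' * b * p
  have hEQ2 : M + x = (m' * b) * p := by
    have h1 : m' * E + m' * 1 = m' * P := by
      rw [← Nat.mul_add, (show E + 1 = P by omega)]
    have h2 : (m' * b) * p = m' * (b * p) := by ring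
    have h3 : m' * (b * p) = m' * P := by rw [hbpP]
    omega
  -- M = (m'*b - 1)*p + (p - x)
  obtain ⟨w, hw⟩ : ∃ w, w + 1 = m' * b := by
    have h1 : 1 * 1 ≤ m' * b := Nat.mul_le_mul hm' (by omega)
    exact ⟨m' * b - 1, by omega⟩
  have hMdec : M = w * p + (p - x) := by
    have h2 : w * p + p = (m' * b) * p := by
      rw [← hw]
      ring
    omega
  -- phi evaluation
  have hphiM : phi b p M = w + sb b (p - x) := by
    rw [hMdec, phi_eval hb (by omega)]
  -- phi upper bound: phi M ≤ C
  have hphiC : phi b p M ≤ C := by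
    have := phi_sum_le hb (show n = (n-1) + 1 by omega) c
    rw [← hpdef] at this
    exact this
  -- sb lower bound
  have hsbl : ν * β ≤ sb b (p - x) + (x - 1) := by
    have h1 : p - 1 = (p - x) + (x - 1) := by omega
    have h2 : sb b (p - 1) = ν * β := by
      rw [hpdef, sb_pow_sub_one hb (n-1), hν, hβ]
    have h3 := sb_add_le hb (p - x) (x - 1)
    rw [← h1] at h3
    omega
  -- final contradiction
  have hfin : m' * 2 ≤ m' * b := Nat.mul_le_mul_left _ hb
  omega

def RepC (b n k m : ℕ) : Prop :=
  ∃ c : ℕ → ℕ, (∑ l ∈ Finset.range n, c l) ≤ m ∧ (∑ l ∈ Finset.range n, c l * repunit b l) = k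

lemma repc_mono {b n k m m' : ℕ} (h : m ≤ m') : RepC b n k m → RepC b n k m' := by
  rintro ⟨c, h1, h2⟩
  exact ⟨c, le_trans h1 h, h2⟩

lemma repc_zero (b n m : ℕ) : RepC b n 0 m :=
  ⟨fun _ => 0, by simp, by simp⟩

lemma repc_single {b n : ℕ} (l₀ : ℕ) (hl : l₀ < n) (q : ℕ) :
    RepC b n (q * repunit b l₀) q := by
  refine ⟨fun i => if i = l₀ then q else 0, ?_, ?_⟩
  · rw [Finset.sum_ite_eq' (Finset.range n) l₀]
    simp [hl]
  · rw [Finset.sum_congr rfl (fun i _ => ite_zero_mul (i = l₀) q (repunit b i))]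
    rw [Finset.sum_ite_eq' (Finset.range n) l₀]
    simp [hl]

lemma repc_add {b n k m k' m' : ℕ} (h : RepC b n k m) (h' : RepC b n k' m') :
    RepC b n (k + k') (m + m') := by
  obtain ⟨c, h1, h2⟩ := h
  obtain ⟨c', h1', h2'⟩ := h'
  refine ⟨fun i => c i + c' i, ?_, ?_⟩
  · rw [Finset.sum_add_distrib]
    omega
  · rw [Finset.sum_congr rfl (fun i _ => add_mul (c i) (c' i) (repunit b i)),
      Finset.sum_add_distrib, h2, h2']

lemma repc_lift {b n n' k m : ℕ} (hn : n ≤ n') (h : RepC b n k m) : RepC b n' k m := by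
  obtain ⟨c, h1, h2⟩ := h
  refine ⟨fun i => if i < n then c i else 0, ?_, ?_⟩
  · rw [← Finset.sum_subset (Finset.range_subset_range.2 hn)
      (fun x _ hx => by simp [Finset.mem_range.not.mp hx, if_neg])]
    calc ∑ i ∈ Finset.range n, (if i < n then c i else 0) = ∑ i ∈ Finset.range n, c i :=
      Finset.sum_congr rfl (fun i hi => by simp [Finset.mem_range.mp hi])
    _ ≤ m := h1
  · rw [← Finset.sum_subset (Finset.range_subset_range.2 hn)
      (fun x _ hx => by simp [Finset.mem_range.not.mp hx, if_neg])]
    calc ∑ i ∈ Finset.range n, (if i < n then c i else 0) * repunit b i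
        = ∑ i ∈ Finset.range n, c i * repunit b i :=
      Finset.sum_congr rfl (fun i hi => by simp [Finset.mem_range.mp hi])
    _ = k := h2

lemma ico_sum_key {b n j : ℕ} (hb : 1 < b) (hj : 1 ≤ j) (hjn : j ≤ n) :
    (∑ i ∈ Finset.Ico (n-j) n, (b-1) * repunit b i) + j + repunit b (n-j) = repunit b n := by
  have h1 : ∑ i ∈ Finset.Ico (n-j) n, ((b-1) * repunit b i + 1) = ∑ i ∈ Finset.Ico (n-j) n, b ^ i :=
    Finset.sum_congr rfl (fun i _ => pred_mul_repunit b i (by omega))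
  rw [Finset.sum_add_distrib] at h1
  have hcard : ∑ _i ∈ Finset.Ico (n-j) n, 1 = j := by
    rw [Finset.sum_const, Nat.card_Ico]
    simp
    omega
  have h2 : repunit b (n-j) + ∑ i ∈ Finset.Ico (n-j) n, b ^ i = repunit b n := by
    unfold repunit
    simp only [Finset.range_eq_Ico]
    exact Finset.sum_Ico_consecutive _ (by omega) (by omega)
  omega

lemma repc_rsub {b n j : ℕ} (hb : 1 < b) (hj : 1 ≤ j) (hjn : j + 1 ≤ n) :
    RepC b n (repunit b n - j) (j*(b-1)+1) := by
  refine ⟨fun i => (if i ∈ Finset.Ico (n-j) n then b-1 else 0) + (if i = n-j then 1 else 0), ?_, ?_⟩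
  · rw [Finset.sum_add_distrib, Finset.sum_ite_mem, Finset.sum_ite_eq' (Finset.range n) (n-j)]
    have hinter : Finset.range n ∩ Finset.Ico (n-j) n = Finset.Ico (n-j) n := by
      rw [Finset.range_eq_Ico]
      rw [Finset.inter_comm]
      apply Finset.inter_eq_left.mpr
      intro x hx
      simp only [Finset.mem_Ico] at *
      omega
    rw [hinter, Finset.sum_const, Nat.card_Ico]
    simp only [Finset.mem_range, smul_eq_mul]
    have : n - (n - j) = j := by omega
    rw [this, if_pos (by omega : n - j < n)]
  · rw [Finset.sum_congr rfl (fun i _ => add_mul _ _ (repunit b i)), Finset.sum_add_distrib]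
    rw [Finset.sum_congr rfl (fun i (_ : i ∈ Finset.range n) =>
      ite_zero_mul (i ∈ Finset.Ico (n-j) n) (b-1) (repunit b i))]
    rw [Finset.sum_ite_mem]
    have hinter : Finset.range n ∩ Finset.Ico (n-j) n = Finset.Ico (n-j) n := by
      rw [Finset.range_eq_Ico, Finset.inter_comm]
      apply Finset.inter_eq_left.mpr
      intro x hx
      simp only [Finset.mem_Ico] at *
      omega
    rw [hinter]
    rw [Finset.sum_congr rfl (fun i _ => ite_zero_mul (i = n-j) 1 (repunit b i))]
    rw [Finset.sum_ite_eq' (Finset.range n) (n-j)]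
    rw [if_pos (Finset.mem_range.mpr (by omega : n - j < n))]
    simp only [one_mul]
    have hkey := ico_sum_key (n := n) hb hj (by omega)
    have hjr : j ≤ repunit b n := le_trans (by omega) (le_repunit b n (by omega))
    omega

lemma repc_lift_add {b n q k m : ℕ} (h : RepC b n k m) :
    RepC b (n+1) (k + q * repunit b n) (m + q) :=
  repc_add (repc_lift (Nat.le_succ n) h) (repc_single n (Nat.lt_succ_self n) q)

lemma ex1 {b : ℕ} (hb : 1 < b) :
    ∀ n, 2 ≤ n → ∀ k, k + (n-1) ≤ repunit b n → RepC b n k ((n-1)*(b-1)+1) := by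
  intro n hn
  induction n, hn using Nat.le_induction with
  | base =>
    intro k hk
    have hr2 : repunit b 2 = b + 1 := by
      rw [show (2:ℕ) = 1 + 1 from rfl, repunit_succ, repunit_one, pow_one]
      omega
    have hkb : k ≤ b := by omega
    have := repc_single (b := b) (n := 2) 1 (by omega) k
    rw [repunit_one, Nat.mul_one] at this
    exact repc_mono (by omega) this
  | succ n hn ih =>
    intro k hk
    set R := repunit b n with hR
    have hRpos : 1 ≤ R := repunit_pos b n (by omega)
    have hsucc : repunit b (n+1) = b * R + 1 := repunit_succ' b n
    obtain ⟨q, ρ, hρR, hkqρ⟩ : ∃ q ρ, ρ < R ∧ k = q * R + ρ :=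
      ⟨k / R, k % R, Nat.mod_lt _ (by omega), by
        have h := Nat.div_add_mod k R
        have h2 : R * (k / R) = (k / R) * R := Nat.mul_comm _ _
        omega⟩
    have hq : q ≤ b - 1 := by
      by_contra hc
      push_neg at hc
      have : b * R ≤ q * R := Nat.mul_le_mul_right R (by omega)
      omega
    have hn1 : (n + 1) - 1 = n := by omega
    rw [hn1]
    by_cases hcase : ρ + (n-1) ≤ R
    · have hbase := ih ρ hcase
      have := repc_lift_add (q := q) hbase
      rw [← hR] at this
      have hke : ρ + q * R = k := by omega
      rw [hke] at this
      apply repc_mono ?_ this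
      have h1 : (n-1)*(b-1) + (b-1) = n * (b-1) := by
        have : ((n-1) + 1) * (b-1) = (n-1)*(b-1) + (b-1) := by ring
        rw [← this, (show n - 1 + 1 = n by omega)]
      omega
    · -- ρ = R - j with 1 ≤ j ≤ n - 2
      push_neg at hcase
      set j := R - ρ with hj
      have hj1 : 1 ≤ j := by omega
      have hjn : j + 1 ≤ n := by
        have hnR : n ≤ R := le_repunit b n (by omega)
        omega
      have hbase := repc_rsub hb hj1 hjn
      rw [← hR] at hbase
      have hρe : R - j = ρ := by omega
      rw [hρe] at hbase
      have := repc_lift_add (q := q) hbase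
      rw [← hR] at this
      have hke : ρ + q * R = k := by omega
      rw [hke] at this
      apply repc_mono ?_ this
      have h1 : (j+1)*(b-1) ≤ n * (b-1) := Nat.mul_le_mul_right _ (by omega)
      have h2 : (j+1)*(b-1) = j*(b-1) + (b-1) := by ring
      omega

lemma repc_dec {b n k m : ℕ} (hb : 1 < b) (hn : 2 ≤ n) (h : RepC b n (k+1) m) :
    RepC b n k (m + (b-1)) := by
  obtain ⟨c, h1, h2⟩ := h
  have hex : ∃ l, 1 ≤ l ∧ l < n ∧ 1 ≤ c l := by
    by_contra hc
    push_neg at hc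
    have : ∑ l ∈ Finset.range n, c l * repunit b l = 0 := by
      apply Finset.sum_eq_zero
      intro l hl
      rcases Nat.eq_zero_or_pos l with rfl | hl1
      · rw [repunit_zero, Nat.mul_zero]
      · have hz : c l = 0 := by
          have := hc l hl1 (Finset.mem_range.mp hl)
          omega
        rw [hz, Nat.zero_mul]
    omega
  obtain ⟨l, hl1, hln, hcl⟩ := hex
  have hlmem : l ∈ Finset.range n := Finset.mem_range.mpr hln
  -- first remove one copy of repunit l
  set c' : ℕ → ℕ := fun i => if i = l then c i - 1 else c i with hc'
  have hsum1 : (∑ i ∈ Finset.range n, c' i) + 1 = ∑ i ∈ Finset.range n, c i := by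
    rw [← Finset.sum_erase_add _ c' hlmem, ← Finset.sum_erase_add _ c hlmem]
    have he : ∑ i ∈ (Finset.range n).erase l, c' i = ∑ i ∈ (Finset.range n).erase l, c i :=
      Finset.sum_congr rfl (fun i hi => by
        simp only [hc', if_neg (Finset.ne_of_mem_erase hi)])
    rw [he]
    simp only [hc', if_pos rfl]
    omega
  have hsum2 : (∑ i ∈ Finset.range n, c' i * repunit b i) + repunit b l
      = ∑ i ∈ Finset.range n, c i * repunit b i := by
    rw [← Finset.sum_erase_add _ (fun i => c' i * repunit b i) hlmem,
      ← Finset.sum_erase_add _ (fun i => c i * repunit b i) hlmem]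
    have he : ∑ i ∈ (Finset.range n).erase l, c' i * repunit b i
        = ∑ i ∈ (Finset.range n).erase l, c i * repunit b i :=
      Finset.sum_congr rfl (fun i hi => by
        simp only [hc', if_neg (Finset.ne_of_mem_erase hi)])
    rw [he]
    simp only [hc', if_pos rfl]
    have : (c l - 1) * repunit b l + repunit b l = c l * repunit b l := by
      have e : (c l - 1) * repunit b l + 1 * repunit b l = ((c l - 1) + 1) * repunit b l := by ring
      rw [Nat.one_mul] at e
      rw [e, (show c l - 1 + 1 = c l by omega)]
    omega
  rcases Nat.eq_or_lt_of_le hl1 with hl1' | hl2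
  · -- l = 1 : removing a single 1
    have hrl : repunit b l = 1 := by rw [← hl1', repunit_one]
    exact repc_mono (show m - 1 ≤ m + (b-1) by omega) ⟨c', by omega, by omega⟩
  · -- l ≥ 2 : replace repunit l by b copies of repunit (l-1)
    have hrl : repunit b l = b * repunit b (l-1) + 1 := by
      have := repunit_succ' b (l-1)
      rw [(show l - 1 + 1 = l by omega)] at this
      exact this
    have hsingle := repc_single (b := b) (n := n) (l-1) (by omega) b
    have hc'rep : RepC b n (∑ i ∈ Finset.range n, c' i * repunit b i) (m - 1) :=
      ⟨c', by omega, rfl⟩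
    have hnew := repc_add hc'rep hsingle
    have hval : (∑ i ∈ Finset.range n, c' i * repunit b i) + b * repunit b (l-1) = k := by
      omega
    rw [hval] at hnew
    exact repc_mono (by omega) hnew

lemma repc_all {b n : ℕ} (hb : 1 < b) (hn : 2 ≤ n) :
    ∀ s k, k + s = repunit b n - 1 → RepC b n k (b + s * (b-1)) := by
  intro s
  induction s with
  | zero =>
    intro k hk
    have h := repc_rsub (b := b) (n := n) hb (le_refl 1) hn
    rw [(show repunit b n - 1 = k by omega)] at h
    exact repc_mono (by omega) h
  | succ s ih =>
    intro k hk
    have hrn : 2 ≤ repunit b n := by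
      have h21 : repunit b 2 = b + 1 := by
        rw [show (2:ℕ) = 1 + 1 from rfl, repunit_succ, repunit_one, pow_one]
        omega
      have h22 : repunit b 2 ≤ repunit b n := repunit_mono b hn
      omega
    have h := ih (k+1) (by omega)
    have h2 := repc_dec hb hn h
    apply repc_mono ?_ h2
    have : (s+1) * (b-1) = s*(b-1) + (b-1) := by ring
    omega

lemma mem_of_repc {b a n k m : ℕ} (hn : 0 < n) (h : RepC b n k m) :
    m * repunit b n + a * k ∈ grep b a n := by
  obtain ⟨c, hc, hsum⟩ := h
  exact (mem_grep_iff b a n hn _).mpr ⟨m, c, hc, by rw [hsum]⟩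

lemma step1 {b a n : ℕ} (hb : 1 < b) (hn : 2 ≤ n) (haE : a < b ^ n - 1)
    (k : ℕ) (hk : k < repunit b n) :
    ∃ m, RepC b n k m ∧
      m * repunit b n + a * k ≤ ((n-1) * (b ^ n - 1 - a) + a * repunit b n) + repunit b n := by
  set r := repunit b n with hr
  obtain ⟨E, hEdef⟩ : ∃ E, (b-1) * r = E := ⟨_, rfl⟩
  have hE1 : (b-1) * r + 1 = b ^ n := pred_mul_repunit b n (by omega)
  have hE2 : b ^ n - 1 = E := by omega
  obtain ⟨ν, hν⟩ : ∃ ν, n - 1 = ν := ⟨_, rfl⟩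
  have hν1 : 1 ≤ ν := by omega
  obtain ⟨A', hA'⟩ : ∃ A', A' + a = E := ⟨E - a, by omega⟩
  have hgoal : (n-1) * (b ^ n - 1 - a) = ν * A' := by
    rw [hν, hE2, (show E - a = A' by omega)]
  rw [hgoal]
  by_cases hcase : k + ν ≤ r
  · refine ⟨ν*(b-1)+1, ?_, ?_⟩
    · have := ex1 hb n hn k (by omega)
      rw [hν] at this
      exact this
    · have g1 : (ν*(b-1)+1)*r = ν*((b-1)*r) + r := by ring
      have g2 : ν*((b-1)*r) = ν*E := by rw [hEdef]
      have g3 : ν*A' + ν*a = ν*E := by rw [← hA']; ring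
      have g4 : a*(ν+k) ≤ a*r := Nat.mul_le_mul_left _ (by omega)
      have g5 : a*(ν+k) = a*ν + a*k := by ring
      have g6 : a*ν = ν*a := Nat.mul_comm _ _
      omega
  · push_neg at hcase
    obtain ⟨j, hj⟩ : ∃ j, r - k = j := ⟨_, rfl⟩
    have hj1 : 1 ≤ j := by omega
    have hjν : j + 1 ≤ ν := by omega
    refine ⟨j*(b-1)+1, ?_, ?_⟩
    · have := repc_rsub (b := b) (n := n) hb hj1 (by omega)
      rw [← hr, (show r - j = k by omega)] at this
      exact this
    · have q1 : (j*(b-1)+1)*r = j*((b-1)*r) + r := by ring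
      have q2 : j*((b-1)*r) = j*E := by rw [hEdef]
      have q3 : j*A' + j*a = j*E := by rw [← hA']; ring
      have q4 : j*A' ≤ ν*A' := Nat.mul_le_mul_right _ (by omega)
      have q5 : a*k + a*j = a*r := by rw [← Nat.mul_add, (show k + j = r by omega)]
      have q6 : a*j = j*a := Nat.mul_comm _ _
      omega

lemma step2 {b a n : ℕ} (hb : 1 < b) (hn : 2 ≤ n) (haE : b ^ n - 1 < a)
    (k : ℕ) (hk : k < repunit b n) :
    ∃ m, RepC b n k m ∧
      m * repunit b n + a * k ≤ ((b ^ n - 1) + a * (repunit b n - 1)) + repunit b n := by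
  set r := repunit b n with hr
  obtain ⟨E, hEdef⟩ : ∃ E, (b-1) * r = E := ⟨_, rfl⟩
  have hE1 : (b-1) * r + 1 = b ^ n := pred_mul_repunit b n (by omega)
  have hE2 : b ^ n - 1 = E := by omega
  rw [hE2]
  obtain ⟨s, hs⟩ : ∃ s, r - 1 - k = s := ⟨_, rfl⟩
  have hrpos : 1 ≤ r := repunit_pos b n (by omega)
  refine ⟨b + s*(b-1), ?_, ?_⟩
  · exact repc_all hb hn s k (by omega)
  · have f1 : (b + s*(b-1))*r = b*r + s*((b-1)*r) := by ring
    have f2 : s*((b-1)*r) = s*E := by rw [hEdef]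
    have f3 : s*(E+1) ≤ s*a := Nat.mul_le_mul_left _ (by omega)
    have f4 : s*(E+1) = s*E + s := by ring
    have f5 : a*k + a*s = a*(r-1) := by rw [← Nat.mul_add, (show k + s = r - 1 by omega)]
    have f6 : a*s = s*a := Nat.mul_comm _ _
    have f7 : (b-1)*r + r = b*r := succ_pred_mul (by omega) r
    omega

lemma mem_of_ge {b a n : ℕ} (hb : 1 < b) (hn : 2 ≤ n) (hgcd : Nat.gcd (repunit b n) a = 1)
    (NF : ℕ)
    (hstep : ∀ k, k < repunit b n →
      ∃ m, RepC b n k m ∧ m * repunit b n + a * k ≤ NF + repunit b n)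
    (y : ℕ) (hy : NF < y) : y ∈ grep b a n := by
  set r := repunit b n with hr
  have hr2 : 2 ≤ r := by
    have h21 : repunit b 2 = b + 1 := by
      rw [show (2:ℕ) = 1 + 1 from rfl, repunit_succ, repunit_one, pow_one]
      omega
    have h22 : repunit b 2 ≤ r := repunit_mono b hn
    omega
  haveI : NeZero r := ⟨by omega⟩
  set kz := (a : ZMod r)⁻¹ * (y : ZMod r) with hkz
  set k := kz.val with hk
  have hkr : k < r := ZMod.val_lt _
  have hcast : ((k : ℕ) : ZMod r) = kz := ZMod.natCast_rightInverse kz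
  have h1 : ((a * k : ℕ) : ZMod r) = (y : ZMod r) := by
    push_cast
    rw [hcast, hkz, ← mul_assoc,
      ZMod.coe_mul_inv_eq_one a (Nat.Coprime.symm hgcd), one_mul]
  have hmod : a * k ≡ y [MOD r] := (ZMod.natCast_eq_natCast_iff _ _ _).mp h1
  obtain ⟨m, hrep, hle⟩ := hstep k hkr
  have hw : m * r + a * k ∈ grep b a n := mem_of_repc (by omega) hrep
  set w := m * r + a * k with hwdef
  have hwmod : w % r = (a * k) % r := by
    rw [hwdef, Nat.add_comm, Nat.add_mul_mod_self_right]
  have hwy : w ≡ y [MOD r] := by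
    unfold Nat.ModEq
    rw [hwmod]
    exact hmod
  have hrmem : r ∈ grep b a n :=
    AddSubmonoid.subset_closure ⟨1, le_refl 1, by simp [aseq, repunit_zero, hr]⟩
  rcases le_or_gt w y with hcase | hcase
  · obtain ⟨d, hd⟩ := (Nat.modEq_iff_dvd' hcase).mp hwy
    have hye : y = w + d * r := by
      have : d * r = r * d := Nat.mul_comm _ _
      omega
    rw [hye]
    apply AddSubmonoid.add_mem _ hw
    rw [← smul_eq_mul]
    exact AddSubmonoid.nsmul_mem _ hrmem d
  · exfalso
    obtain ⟨d, hd⟩ := (Nat.modEq_iff_dvd' (le_of_lt hcase)).mp hwy.symm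
    rcases Nat.eq_zero_or_pos d with rfl | hd1
    · omega
    · have : r * 1 ≤ r * d := Nat.mul_le_mul_left _ hd1
      omega

lemma not_mem1 {b a n : ℕ} (hb : 1 < b) (hn : 2 ≤ n) (ha : 0 < a) (haE : a < b ^ n - 1)
    (hgcd : Nat.gcd (repunit b n) a = 1) :
    ((n-1) * (b ^ n - 1 - a) + a * repunit b n) ∉ grep b a n := by
  intro hmem
  rw [mem_grep_iff b a n (by omega)] at hmem
  obtain ⟨m, c, hc, heq⟩ := hmem
  set r := repunit b n with hr
  set K := ∑ l ∈ Finset.range n, c l * repunit b l with hK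
  have hE1 : (b-1)*r + 1 = b ^ n := pred_mul_repunit b n (by omega)
  obtain ⟨E, hEdef⟩ : ∃ E, (b-1) * r = E := ⟨_, rfl⟩
  have hE2 : b ^ n - 1 = E := by omega
  obtain ⟨ν, hν⟩ : ∃ ν, n - 1 = ν := ⟨_, rfl⟩
  have hν1 : 1 ≤ ν := by omega
  have haE' : a + 1 ≤ E := by omega
  rw [hν, hE2] at heq
  have hr2 : 2 ≤ r := by
    have h21 : repunit b 2 = b + 1 := by
      rw [show (2:ℕ) = 1 + 1 from rfl, repunit_succ, repunit_one, pow_one]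
      omega
    have h22 : repunit b 2 ≤ r := repunit_mono b hn
    omega
  have hr0 : (r:ℤ) ≠ 0 := Int.natCast_ne_zero.mpr (by omega)
  -- split the sum
  have hsplit : K = ∑ l ∈ Finset.Ico 1 n, c l * repunit b l := by
    rw [hK, Finset.range_eq_Ico, Finset.sum_eq_sum_Ico_succ_bot (by omega : 0 < n)]
    simp [repunit_zero]
  have hCI : (∑ l ∈ Finset.Ico 1 n, c l) ≤ m := by
    refine le_trans (Finset.sum_le_sum_of_subset ?_) hc
    intro x hx
    simp only [Finset.mem_Ico, Finset.mem_range] at *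
    omega
  -- integer arithmetic
  have heqZ : (ν:ℤ)*((E:ℤ) - a) + a*r = m*r + a*K := by
    have hcast : ((ν*(E-a) + a*r : ℕ) : ℤ) = ((m*r + a*K : ℕ) : ℤ) := by rw [heq]
    push_cast [Nat.cast_sub (by omega : a ≤ E)] at hcast
    linarith
  have hEz : ((b:ℤ)-1)*r = E := by
    have : (((b-1)*r : ℕ) : ℤ) = (E:ℤ) := by rw [hEdef]
    push_cast [Nat.cast_sub (by omega : 1 ≤ b)] at this
    linarith
  have hdvd : (r:ℤ) ∣ (a:ℤ) * ((K:ℤ) + ν) :=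
    ⟨(ν:ℤ)*((b:ℤ)-1) + a - m, by linear_combination (-1:ℤ) * heqZ - (ν:ℤ) * hEz⟩
  have hco : IsCoprime (r:ℤ) (a:ℤ) := by
    rw [Int.isCoprime_iff_gcd_eq_one, Int.gcd_natCast_natCast]
    exact hgcd
  have hdvd2 : (r:ℤ) ∣ ((K:ℤ) + ν) := hco.dvd_of_dvd_mul_left hdvd
  obtain ⟨t, ht⟩ := hdvd2
  have ht1 : 1 ≤ t := by
    rcases le_or_gt t 0 with h | h
    · exfalso
      have : (r:ℤ) * t ≤ 0 := mul_nonpos_of_nonneg_of_nonpos (by positivity) h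
      omega
    · omega
  set m' := t.toNat with hm'def
  have hm' : (m' : ℤ) = t := Int.toNat_of_nonneg (by omega)
  have hm'1 : 1 ≤ m' := by omega
  have hKZ : (K:ℤ) + ν = (r:ℤ) * m' := by rw [hm']; exact ht
  have hKν : K + ν = r * m' := by exact_mod_cast hKZ
  -- apply count_lower
  have hlow := count_lower hb hn c m' hm'1 (by
    rw [hν, ← hsplit, ← hr]
    have : m' * r = r * m' := Nat.mul_comm _ _
    omega)
  rw [hν] at hlow
  -- m + a*m' = ν*(b-1) + a
  have hcancel : (r:ℤ) * ((m:ℤ) + a*m') = (r:ℤ) * ((ν:ℤ)*((b:ℤ)-1) + a) := by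
    linear_combination (-1 : ℤ) * heqZ - (a:ℤ) * hKZ - (ν:ℤ) * hEz
  have hmm : (m:ℤ) + a*m' = (ν:ℤ)*((b:ℤ)-1) + a := mul_left_cancel₀ hr0 hcancel
  have hmmN : m + a*m' = ν*(b-1) + a := by
    have : ((m + a*m' : ℕ):ℤ) = ((ν*(b-1) + a : ℕ):ℤ) := by
      push_cast [Nat.cast_sub (by omega : 1 ≤ b)]
      linarith
    exact_mod_cast this
  have ham' : a*1 ≤ a*m' := Nat.mul_le_mul_left _ hm'1
  omega

lemma not_mem2 {b a n : ℕ} (hb : 1 < b) (hn : 2 ≤ n) (ha : 0 < a) (haE : b ^ n - 1 < a)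
    (hgcd : Nat.gcd (repunit b n) a = 1) :
    ((b ^ n - 1) + a * (repunit b n - 1)) ∉ grep b a n := by
  intro hmem
  rw [mem_grep_iff b a n (by omega)] at hmem
  obtain ⟨m, c, hc, heq⟩ := hmem
  set r := repunit b n with hr
  set K := ∑ l ∈ Finset.range n, c l * repunit b l with hK
  have hE1 : (b-1)*r + 1 = b ^ n := pred_mul_repunit b n (by omega)
  obtain ⟨E, hEdef⟩ : ∃ E, (b-1) * r = E := ⟨_, rfl⟩
  have hE2 : b ^ n - 1 = E := by omega
  rw [hE2] at heq
  have hr2 : 2 ≤ r := by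
    have h21 : repunit b 2 = b + 1 := by
      rw [show (2:ℕ) = 1 + 1 from rfl, repunit_succ, repunit_one, pow_one]
      omega
    have h22 : repunit b 2 ≤ r := repunit_mono b hn
    omega
  have hr0 : (r:ℤ) ≠ 0 := Int.natCast_ne_zero.mpr (by omega)
  have hsplit : K = ∑ l ∈ Finset.Ico 1 n, c l * repunit b l := by
    rw [hK, Finset.range_eq_Ico, Finset.sum_eq_sum_Ico_succ_bot (by omega : 0 < n)]
    simp [repunit_zero]
  have hCI : (∑ l ∈ Finset.Ico 1 n, c l) ≤ m := by
    refine le_trans (Finset.sum_le_sum_of_subset ?_) hc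
    intro x hx
    simp only [Finset.mem_Ico, Finset.mem_range] at *
    omega
  have heqZ : (E:ℤ) + a*((r:ℤ) - 1) = m*r + a*K := by
    have hcast : ((E + a*(r-1) : ℕ) : ℤ) = ((m*r + a*K : ℕ) : ℤ) := by rw [heq]
    push_cast [Nat.cast_sub (by omega : 1 ≤ r)] at hcast
    linarith
  have hEz : ((b:ℤ)-1)*r = E := by
    have : (((b-1)*r : ℕ) : ℤ) = (E:ℤ) := by rw [hEdef]
    push_cast [Nat.cast_sub (by omega : 1 ≤ b)] at this
    linarith
  have hdvd : (r:ℤ) ∣ (a:ℤ) * ((K:ℤ) + 1) :=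
    ⟨(b:ℤ) - 1 - m + a, by linear_combination (-1:ℤ) * heqZ - hEz⟩
  have hco : IsCoprime (r:ℤ) (a:ℤ) := by
    rw [Int.isCoprime_iff_gcd_eq_one, Int.gcd_natCast_natCast]
    exact hgcd
  have hdvd2 : (r:ℤ) ∣ ((K:ℤ) + 1) := hco.dvd_of_dvd_mul_left hdvd
  obtain ⟨t, ht⟩ := hdvd2
  have ht1 : 1 ≤ t := by
    rcases le_or_gt t 0 with h | h
    · exfalso
      have : (r:ℤ) * t ≤ 0 := mul_nonpos_of_nonneg_of_nonpos (by positivity) h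
      omega
    · omega
  have hcancel : (r:ℤ) * ((a:ℤ)*t) = (r:ℤ) * ((b:ℤ) - 1 - m + a) := by
    linear_combination (-1:ℤ) * heqZ - hEz - (a:ℤ) * ht
  have hat : (a:ℤ)*t = (b:ℤ) - 1 - m + a := mul_left_cancel₀ hr0 hcancel
  have haZ : (E:ℤ) < a := by exact_mod_cast hE2 ▸ haE
  have hab : (b:ℤ) ≤ a := by
    have h1 : ((b:ℤ)-1) * 2 ≤ ((b:ℤ)-1) * r := by
      apply mul_le_mul_of_nonneg_left _ (by push_cast; omega)
      exact_mod_cast hr2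
    omega
  have ht2 : t = 1 := by
    by_contra hne
    have h2 : 2 ≤ t := by omega
    have h3 : (a:ℤ)*2 ≤ (a:ℤ)*t := by
      apply mul_le_mul_of_nonneg_left h2 (by positivity)
    omega
  rw [ht2, mul_one] at hat ht
  have hKr : K + 1 = r := by exact_mod_cast ht
  have hmN : m + 1 = b := by
    have hm1 : (m:ℤ) + 1 = b := by linarith [hat]
    exact_mod_cast hm1
  set R' := repunit b (n-1) with hR'
  have hKb : K ≤ (∑ l ∈ Finset.Ico 1 n, c l) * R' := by
    rw [hsplit]
    refine le_trans (Finset.sum_le_sum ?_) (le_of_eq (Finset.sum_mul _ _ _).symm)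
    intro l hl
    have hl2 : l ≤ n - 1 := by
      have := (Finset.mem_Ico.mp hl).2
      omega
    exact Nat.mul_le_mul_left _ (repunit_mono b hl2)
  have h2 : (∑ l ∈ Finset.Ico 1 n, c l) * R' ≤ m * R' := Nat.mul_le_mul_right _ hCI
  have h3 : (b-1) * R' + 1 = b^(n-1) := pred_mul_repunit b (n-1) (by omega)
  have h4 : b^(n-1) < r := pow_lt_repunit b n hn
  have h5 : m * R' = (b-1) * R' := by rw [(show m = b-1 by omega)]
  omega

/-- The Frobenius number of `S_a(b,n)`, i.e. the greatest integer not belonging to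
`S_a(b,n)`, equals `(n−1)·(b^n − 1 − a) + a·r_b(n)` if `a < b^n − 1`, and
`b^n − 1 − a + a·r_b(n)` if `a > b^n − 1`. -/
theorem stmt_11 (b a n : ℕ) (hb : 1 < b) (hn : 1 < n) (ha : 0 < a)
    (hgcd : Nat.gcd (repunit b n) a = 1) :
    (a < b ^ n - 1 →
      IsGreatest {x : ℤ | ∀ s ∈ grep b a n, (s : ℤ) ≠ x}
        (((n : ℤ) - 1) * ((b : ℤ) ^ n - 1 - a) + a * repunit b n)) ∧
    (a > b ^ n - 1 →
      IsGreatest {x : ℤ | ∀ s ∈ grep b a n, (s : ℤ) ≠ x}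
        ((b : ℤ) ^ n - 1 - a + a * repunit b n)) := by
  have hn2 : 2 ≤ n := hn
  have hbn1 : 1 ≤ b ^ n := Nat.one_le_pow _ _ (by omega)
  have hrpos : 1 ≤ repunit b n := repunit_pos b n (by omega)
  constructor
  · -- case a < b^n - 1
    intro haE
    set NF1 : ℕ := (n-1) * (b ^ n - 1 - a) + a * repunit b n with hNF1
    have hcast : ((n : ℤ) - 1) * ((b : ℤ) ^ n - 1 - a) + a * repunit b n = (NF1 : ℤ) := by
      rw [hNF1]
      push_cast [Nat.cast_sub (by omega : a ≤ b ^ n - 1), Nat.cast_sub (by omega : 1 ≤ b ^ n),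
        Nat.cast_sub (by omega : 1 ≤ n)]
      ring
    rw [hcast]
    constructor
    · intro s hs hseq
      have : s = NF1 := by exact_mod_cast hseq
      rw [this] at hs
      exact not_mem1 hb hn2 ha haE hgcd hs
    · intro x hx
      by_contra hlt
      push_neg at hlt
      have hx0 : (0:ℤ) ≤ x := le_trans (by positivity) (le_of_lt hlt)
      obtain ⟨y, rfl⟩ : ∃ y : ℕ, x = (y : ℤ) := ⟨x.toNat, (Int.toNat_of_nonneg hx0).symm⟩
      have hy : NF1 < y := by exact_mod_cast hlt
      have hmem : y ∈ grep b a n :=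
        mem_of_ge hb hn2 hgcd NF1 (fun k hk => step1 hb hn2 haE k hk) y hy
      exact hx y hmem rfl
  · -- case a > b^n - 1
    intro haE
    set NF2 : ℕ := (b ^ n - 1) + a * (repunit b n - 1) with hNF2
    have hcast : (b : ℤ) ^ n - 1 - a + a * repunit b n = (NF2 : ℤ) := by
      rw [hNF2]
      push_cast [Nat.cast_sub (by omega : 1 ≤ b ^ n), Nat.cast_sub hrpos]
      ring
    rw [hcast]
    constructor
    · intro s hs hseq
      have : s = NF2 := by exact_mod_cast hseq
      rw [this] at hs
      exact not_mem2 hb hn2 ha haE hgcd hs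
    · intro x hx
      by_contra hlt
      push_neg at hlt
      have hx0 : (0:ℤ) ≤ x := le_trans (by positivity) (le_of_lt hlt)
      obtain ⟨y, rfl⟩ : ∃ y : ℕ, x = (y : ℤ) := ⟨x.toNat, (Int.toNat_of_nonneg hx0).symm⟩
      have hy : NF2 < y := by exact_mod_cast hlt
      have hmem : y ∈ grep b a n :=
        mem_of_ge hb hn2 hgcd NF2 (fun k hk => step2 hb hn2 haE k hk) y hy
      exact hx y hmem rfl
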